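/- Let r ≥ 2, let G be a graph with no K_r minor, and let S ⊆ V(G). Then the number of distinct sets of the form N(C) ∩ S, over all connected components C of G − S, is at most e(|S|, r) + w(|S|, r) + 1, where e(n, r) is the maximum number of edges and w(n, r) is the maximum number of nonempty cliques of an n-vertex graph with no K_r minor. -/

import Mathlib

open SimpleGraph

/-- `H` is a minor of `G`: there is a family of nonempty, pairwise disjoint, connected
branch sets in `G`, one for each vertex of `H`, such that branch sets of adjacent
vertices of `H` are joined by an edge of `G`. -/
def MinorOf {W V : Type*} (H : SimpleGraph W) (G : SimpleGraph V) : Prop :=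
  ∃ B : W → Set V,
    (∀ w, (G.induce (B w)).Connected) ∧
    (Pairwise fun w w' => Disjoint (B w) (B w')) ∧
    (∀ u v : W, H.Adj u v → ∃ x ∈ B u, ∃ y ∈ B v, G.Adj x y)
/-- `C` is a connected component of `G - S`. -/
def IsCompOf {V : Type*} (G : SimpleGraph V) (S C : Set V) : Prop :=
  Disjoint C S ∧ (G.induce C).Connected ∧
    ∀ v, v ∉ C → (∃ c ∈ C, G.Adj c v) → v ∈ S

/-!
Choose one component of `G - S` for each nonempty attachment set and run through these sets
greedily, building a graph `H` on `S`: if a set is not yet a clique of `H`, join two nonadjacent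
vertices of it and label the new edge by the set. Distinct labels come from disjoint components,
so contracting each labelled component onto an end of its edge shows that `H` is a minor of `G`,
hence `K_r`-minor-free. Every nonempty attachment set either labels an edge of `H` or is a
nonempty clique of `H`; the empty set accounts for the `+ 1`.
-/

namespace IsCompOf

variable {V : Type*} {G : SimpleGraph V} {S C C' : Set V}

lemma subset_of_mem (hC : IsCompOf G S C) (hC' : IsCompOf G S C') {z : V} (hz : z ∈ C)
    (hz' : z ∈ C') : C ⊆ C' := by
  suffices h : ∀ (a b : C), (G.induce C).Walk a b → (a : V) ∈ C' → (b : V) ∈ C' from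
    fun v hv => h _ _ (hC.2.1.preconnected ⟨z, hz⟩ ⟨v, hv⟩).some hz'
  intro a b p
  induction p with
  | nil => exact id
  | @cons x y _ hxy _ ih =>
    refine fun hx => ih (by_contra fun hy => ?_)
    exact Set.disjoint_left.mp hC.1 y.2 (hC'.2.2 y hy ⟨x, hx, hxy⟩)

lemma eq_of_not_disjoint (hC : IsCompOf G S C) (hC' : IsCompOf G S C') (h : ¬ Disjoint C C') :
    C = C' := by
  obtain ⟨z, hz, hz'⟩ := Set.not_disjoint_iff.mp h
  exact (hC.subset_of_mem hC' hz hz').antisymm (hC'.subset_of_mem hC hz' hz)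

end IsCompOf

section Connectivity

variable {W V : Type*} {G : SimpleGraph V}

lemma connected_induce_insert {s : Set V} {d x : V} (hs : (G.induce s).Connected) (hd : d ∈ s)
    (hdx : G.Adj d x) : (G.induce (insert x s)).Connected := by
  rw [Set.insert_eq, Set.union_comm]
  exact connected_induce_union hs.preconnected (G.induce_singleton_eq_top x ▸
    Preconnected.of_subsingleton) hd rfl hdx

lemma connected_induce_biUnion {B : SimpleGraph W} {s : Set W} (hs : (B.induce s).Connected)
    {Q : W → Set V} (hQ : ∀ w ∈ s, (G.induce (Q w)).Connected)
    (hQadj : ∀ u ∈ s, ∀ w ∈ s, B.Adj u w → ∃ x ∈ Q u, ∃ y ∈ Q w, G.Adj x y) :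
    (G.induce (⋃ w ∈ s, Q w)).Connected := by
  set U := ⋃ w ∈ s, Q w
  have hQU : ∀ w ∈ s, Q w ⊆ U := fun w hw => Set.subset_biUnion_of_mem hw
  have reach : ∀ (a b : s), (B.induce s).Walk a b → ∀ x (hx : x ∈ Q a) y (hy : y ∈ Q b),
      (G.induce U).Reachable ⟨x, hQU a a.2 hx⟩ ⟨y, hQU b b.2 hy⟩ := by
    intro a b p
    induction p with
    | @nil a =>
      exact fun x hx y hy => ((hQ a a.2).preconnected ⟨x, hx⟩ ⟨y, hy⟩).map
        (G.induceHomOfLE (hQU a a.2)).toHom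
    | @cons a c _ hac _ ih =>
      intro x hx y hy
      obtain ⟨x', hx', y', hy', hx'y'⟩ := hQadj a a.2 c c.2 hac
      have hxx' := ((hQ a a.2).preconnected ⟨x, hx⟩ ⟨x', hx'⟩).map
        (G.induceHomOfLE (hQU a a.2)).toHom
      have hx'y' : (G.induce U).Adj ⟨x', hQU a a.2 hx'⟩ ⟨y', hQU c c.2 hy'⟩ := hx'y'
      exact hxx'.trans (hx'y'.reachable.trans (ih y' hy' y hy))
  obtain ⟨a⟩ := hs.nonempty
  obtain ⟨⟨x, hx⟩⟩ := (hQ a a.2).nonempty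
  refine (connected_iff_exists_forall_reachable _).mpr ⟨⟨x, hQU a a.2 hx⟩, fun ⟨y, hy⟩ => ?_⟩
  obtain ⟨b, hb, hyb⟩ := Set.mem_iUnion₂.mp hy
  exact reach a ⟨b, hb⟩ (hs.preconnected _ _).some x hx y hyb

end Connectivity

namespace MinorOf

variable {U W V : Type*} {A : SimpleGraph U} {H : SimpleGraph W} {G : SimpleGraph V}

lemma trans (hAH : MinorOf A H) (hHG : MinorOf H G) : MinorOf A G := by
  obtain ⟨P, hPconn, hPdisj, hPadj⟩ := hAH
  obtain ⟨Q, hQconn, hQdisj, hQadj⟩ := hHG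
  refine ⟨fun a => ⋃ w ∈ P a, Q w, fun a => ?_, fun a a' haa' => ?_, fun a a' haa' => ?_⟩
  · exact connected_induce_biUnion (hPconn a) (fun w _ => hQconn w)
      (fun u _ w _ huw => hQadj u w huw)
  · refine Set.disjoint_left.mpr fun x hx hx' => ?_
    obtain ⟨w, hw, hxw⟩ := Set.mem_iUnion₂.mp hx
    obtain ⟨w', hw', hxw'⟩ := Set.mem_iUnion₂.mp hx'
    obtain rfl | hne := eq_or_ne w w'
    · exact Set.disjoint_left.mp (hPdisj haa') hw hw'
    · exact Set.disjoint_left.mp (hQdisj hne) hxw hxw'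
  · obtain ⟨w, hw, w', hw', hww'⟩ := hPadj a a' haa'
    obtain ⟨x, hx, y, hy, hxy⟩ := hQadj w w' hww'
    exact ⟨x, Set.mem_biUnion hw hx, y, Set.mem_biUnion hw' hy, hxy⟩

lemma of_connectors {ι : W → V} (hι : Function.Injective ι) (P : Sym2 W → Set V)
    (hconn : ∀ e ∈ H.edgeSet, (G.induce (P e)).Connected)
    (hdisj : H.edgeSet.PairwiseDisjoint P)
    (hrange : ∀ e ∈ H.edgeSet, Disjoint (P e) (Set.range ι))
    (hadj : ∀ e ∈ H.edgeSet, ∀ i ∈ e, ∃ d ∈ P e, G.Adj d (ι i)) : MinorOf H G := by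
  -- each connector `P e` goes into the branch set of the end `e.out.1` only
  set B : W → Set V := fun i => insert (ι i) (⋃ e ∈ {e ∈ H.edgeSet | e.out.1 = i}, P e)
  have hPB : ∀ e ∈ H.edgeSet, P e ⊆ B e.out.1 := fun e he _ hx =>
    Set.mem_insert_of_mem _ (Set.mem_iUnion₂.mpr ⟨e, ⟨he, rfl⟩, hx⟩)
  refine ⟨B, fun i => ?_, fun i j hij => ?_, fun u v huv => ?_⟩
  · refine G.induce_connected_of_patches (ι i) (Set.mem_insert _ _) fun {v} hv => ?_
    obtain rfl | hv := hv
    · exact ⟨{ι i}, by simp [B], rfl, rfl, .rfl⟩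
    obtain ⟨e, ⟨he, rfl⟩, hve⟩ := Set.mem_iUnion₂.mp hv
    obtain ⟨d, hd, hdi⟩ := hadj e he _ (Sym2.out_fst_mem e)
    exact ⟨insert (ι e.out.1) (P e), Set.insert_subset (Set.mem_insert _ _) (hPB e he),
      Set.mem_insert _ _, Set.mem_insert_of_mem _ hve,
      (connected_induce_insert (hconn e he) hd hdi).preconnected _ _⟩
  · have hιP : ∀ e ∈ H.edgeSet, ∀ k, ι k ∉ P e := fun e he k hk =>
      Set.disjoint_left.mp (hrange e he) hk ⟨k, rfl⟩
    refine Set.disjoint_left.mpr fun x hxi hxj => ?_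
    obtain rfl | hxi := hxi <;> obtain h | hxj := hxj
    · exact hij (hι h)
    · obtain ⟨e, ⟨he, -⟩, hxe⟩ := Set.mem_iUnion₂.mp hxj
      exact hιP e he i hxe
    · obtain ⟨e, ⟨he, -⟩, hxe⟩ := Set.mem_iUnion₂.mp hxi
      exact hιP e he j (h ▸ hxe)
    · obtain ⟨e, ⟨he, rfl⟩, hxe⟩ := Set.mem_iUnion₂.mp hxi
      obtain ⟨e', ⟨he', rfl⟩, hxe'⟩ := Set.mem_iUnion₂.mp hxj
      have hne : e ≠ e' := fun h => hij (h ▸ rfl)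
      exact Set.disjoint_left.mp (hdisj he he' hne) hxe hxe'
  · have he : s(u, v) ∈ H.edgeSet := huv
    obtain hu | hv := Sym2.mem_iff.mp (Sym2.out_fst_mem s(u, v))
    · obtain ⟨d, hd, hdv⟩ := hadj _ he v (Sym2.mem_mk_right u v)
      exact ⟨d, hu ▸ hPB _ he hd, ι v, Set.mem_insert _ _, hdv⟩
    · obtain ⟨d, hd, hdu⟩ := hadj _ he u (Sym2.mem_mk_left u v)
      exact ⟨ι u, Set.mem_insert _ _, d, hv ▸ hPB _ he hd, hdu.symm⟩

end MinorOf

section Labelling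

variable {W : Type*}

lemma exists_labelled_graph {𝒯 : Set (Finset W)} (h𝒯 : 𝒯.Finite) :
    ∃ (H : SimpleGraph W) (f : Sym2 W → Finset W), Set.MapsTo f H.edgeSet 𝒯 ∧
      Set.InjOn f H.edgeSet ∧ (∀ e ∈ H.edgeSet, ∀ i ∈ e, i ∈ f e) ∧
      ∀ t ∈ 𝒯, t ∉ f '' H.edgeSet → H.IsClique (t : Set W) := by
  classical
  induction 𝒯, h𝒯 using Set.Finite.induction_on with
  | empty => exact ⟨⊥, fun _ => ∅, by simp, by simp, by simp, by simp⟩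
  | @insert t 𝒯 ht _ ih =>
    obtain ⟨H, f, hmaps, hinj, hmem, hclique⟩ := ih
    by_cases htH : H.IsClique (t : Set W)
    · refine ⟨H, f, hmaps.mono_right (Set.subset_insert _ _), hinj, hmem, ?_⟩
      rintro t' (rfl | ht') ht'f
      exacts [htH, hclique t' ht' ht'f]
    obtain ⟨i, hi, j, hj, hij, hnadj⟩ : ∃ i ∈ t, ∃ j ∈ t, i ≠ j ∧ ¬ H.Adj i j := by
      simpa [SimpleGraph.IsClique, Set.Pairwise] using htH
    have hnew : s(i, j) ∉ H.edgeSet := hnadj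
    have hE : (H ⊔ edge i j).edgeSet = insert s(i, j) H.edgeSet := by
      rw [edgeSet_sup, edgeSet_edge_of_ne hij, Set.union_singleton]
    have hft : ∀ e ∈ H.edgeSet, f e ≠ t := fun e he hfe => ht (hfe ▸ hmaps he)
    have hupd : ∀ e ∈ H.edgeSet, Function.update f s(i, j) t e = f e := fun e he =>
      Function.update_of_ne (ne_of_mem_of_not_mem he hnew) _ _
    refine ⟨H ⊔ edge i j, Function.update f s(i, j) t, ?_, ?_, ?_, ?_⟩
    · rw [hE]
      rintro e (rfl | he)
      · simp
      · rw [hupd e he]; exact Or.inr (hmaps he)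
    · rw [hE, Set.injOn_insert hnew]
      refine ⟨hinj.congr fun e he => (hupd e he).symm, ?_⟩
      rintro ⟨e, he, hfe⟩
      simp only [Function.update_self] at hfe
      exact hft e he (hupd e he ▸ hfe)
    · rw [hE]
      rintro e (rfl | he) k hk
      · rw [Function.update_self]
        obtain rfl | rfl := Sym2.mem_iff.mp hk
        exacts [hi, hj]
      · rw [hupd e he]; exact hmem e he k hk
    · rintro t' (rfl | ht') ht'f
      · exact absurd ⟨s(i, j), hE ▸ Set.mem_insert _ _, Function.update_self _ _ _⟩ ht'f
      · refine (hclique t' ht' fun ⟨e, he, hfe⟩ => ht'f ?_).mono le_sup_left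
        exact ⟨e, hE ▸ Set.mem_insert_of_mem _ he, (hupd e he).trans hfe⟩

end Labelling

section Counting

variable {W V : Type*} [Finite W]

lemma ncard_le_ncard_edgeSet_add_ncard_cliques {𝒯 : Set (Finset W)}
    (hne : ∀ t ∈ 𝒯, t.Nonempty) {H : SimpleGraph W} {f : Sym2 W → Finset W}
    (hclique : ∀ t ∈ 𝒯, t ∉ f '' H.edgeSet → H.IsClique (t : Set W)) :
    𝒯.ncard ≤ H.edgeSet.ncard + {t : Finset W | t.Nonempty ∧ H.IsClique (t : Set W)}.ncard := by
  set 𝒞 := {t : Finset W | t.Nonempty ∧ H.IsClique (t : Set W)}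
  have hsub : 𝒯 ⊆ f '' H.edgeSet ∪ 𝒞 := fun t ht =>
    (em (t ∈ f '' H.edgeSet)).imp id fun htf => ⟨hne t ht, hclique t ht htf⟩
  calc 𝒯.ncard ≤ (f '' H.edgeSet ∪ 𝒞).ncard := Set.ncard_le_ncard hsub (Set.toFinite _)
    _ ≤ (f '' H.edgeSet).ncard + 𝒞.ncard := Set.ncard_union_le _ _
    _ ≤ H.edgeSet.ncard + 𝒞.ncard := by gcongr; exact Set.ncard_image_le (Set.toFinite _)

lemma exists_minorOf_ncard_le {G : SimpleGraph V} {ι : W → V} (hι : Function.Injective ι)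
    {𝒯 : Set (Finset W)} (hne : ∀ t ∈ 𝒯, t.Nonempty)
    (hcomp : ∀ t ∈ 𝒯, ∃ D, IsCompOf G (Set.range ι) D ∧ ∀ i, i ∈ t ↔ ∃ d ∈ D, G.Adj d (ι i)) :
    ∃ H : SimpleGraph W, MinorOf H G ∧
      𝒯.ncard ≤ H.edgeSet.ncard + {t : Finset W | t.Nonempty ∧ H.IsClique (t : Set W)}.ncard := by
  choose! D hD hDt using hcomp
  have hDdisj : 𝒯.PairwiseDisjoint D := fun t ht t' ht' hne' => by
    refine by_contra fun h => hne' (Finset.ext fun i => ?_)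
    rw [hDt t ht, hDt t' ht', (hD t ht).eq_of_not_disjoint (hD t' ht') h]
  obtain ⟨H, f, hmaps, hinj, hmem, hclique⟩ := exists_labelled_graph (Set.toFinite 𝒯)
  refine ⟨H, MinorOf.of_connectors hι (D ∘ f) (fun e he => (hD _ (hmaps he)).2.1)
    (fun e he e' he' hee' => hDdisj (hmaps he) (hmaps he') (hinj.ne he he' hee'))
    (fun e he => (hD _ (hmaps he)).1) (fun e he i hi => (hDt _ (hmaps he) i).mp (hmem e he i hi)),
    ncard_le_ncard_edgeSet_add_ncard_cliques hne hclique⟩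

lemma exists_minorOf_ncard_neighborhoods_le {G : SimpleGraph V} {S : Set V} {ι : W → V}
    (hι : Function.Injective ι) (hrange : Set.range ι = S) :
    ∃ H : SimpleGraph W, MinorOf H G ∧
      {A : Set V | ∃ D : Set V, IsCompOf G S D ∧ A = S ∩ {x | ∃ d ∈ D, G.Adj d x}}.ncard ≤
        H.edgeSet.ncard + {t : Finset W | t.Nonempty ∧ H.IsClique (t : Set W)}.ncard + 1 := by
  set 𝒩 := {A : Set V | ∃ D : Set V, IsCompOf G S D ∧ A = S ∩ {x | ∃ d ∈ D, G.Adj d x}}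
  set trace : Set V → Finset W := fun A => (Set.toFinite (ι ⁻¹' A)).toFinset
  have hι_trace : ∀ A ∈ 𝒩, ι '' trace A = A := by
    rintro A ⟨D, -, rfl⟩
    rw [Set.Finite.coe_toFinset]
    exact Set.image_preimage_eq_of_subset (hrange ▸ Set.inter_subset_left)
  have htrace : Set.InjOn trace 𝒩 := fun A hA A' hA' h =>
    (hι_trace A hA).symm.trans (h ▸ hι_trace A' hA')
  set 𝒯 := {t ∈ trace '' 𝒩 | t.Nonempty}
  obtain ⟨H, hHG, hcount⟩ := exists_minorOf_ncard_le hι (𝒯 := 𝒯) (fun t ht => ht.2) <| by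
    rintro t ⟨⟨A, ⟨D, hD, rfl⟩, rfl⟩, -⟩
    exact ⟨D, hrange ▸ hD, fun i => by simp [trace, ← hrange]⟩
  refine ⟨H, hHG, ?_⟩
  calc 𝒩.ncard = (trace '' 𝒩).ncard := htrace.ncard_image.symm
    _ ≤ (insert ∅ 𝒯).ncard := Set.ncard_le_ncard (fun t ht =>
        t.eq_empty_or_nonempty.imp id fun htne => ⟨ht, htne⟩) (Set.toFinite _)
    _ ≤ 𝒯.ncard + 1 := Set.ncard_insert_le _ _
    _ ≤ _ := by omega

end Counting

theorem stmt11_general {V : Type*} (G : SimpleGraph V) (r : ℕ)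
    (hG : ¬ MinorOf (⊤ : SimpleGraph (Fin r)) G)
    (S : Finset V) (E Wc : ℕ)
    (hE : ∀ G' : SimpleGraph (Fin S.card), ¬ MinorOf (⊤ : SimpleGraph (Fin r)) G' →
      G'.edgeSet.ncard ≤ E)
    (hW : ∀ G' : SimpleGraph (Fin S.card), ¬ MinorOf (⊤ : SimpleGraph (Fin r)) G' →
      {t : Finset (Fin S.card) | t.Nonempty ∧ G'.IsClique (t : Set (Fin S.card))}.ncard ≤ Wc) :
    {A : Set V | ∃ D : Set V, IsCompOf G (S : Set V) D ∧
      A = (S : Set V) ∩ {x | ∃ d ∈ D, G.Adj d x}}.ncard ≤ E + Wc + 1 := by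
  obtain ⟨H, hHG, hcount⟩ := exists_minorOf_ncard_neighborhoods_le (G := G)
    (Subtype.val_injective.comp S.equivFin.symm.injective) <| by
      rw [Set.range_comp, S.equivFin.symm.range_eq_univ, Set.image_univ, Subtype.range_coe]
  have hH : ¬ MinorOf (⊤ : SimpleGraph (Fin r)) H := fun h => hG (h.trans hHG)
  linarith [hE H hH, hW H hH]

/-- Let `r ≥ 2`, let `G` have no `K_r` minor, and let `S ⊆ V(G)`.  If `E` (resp. `Wc`)
bounds the number of edges (resp. of nonempty cliques) of every `K_r`-minor-free graph on
`|S|` vertices, then the number of distinct sets of the form `N(C) ∩ S`, over connected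
components `C` of `G − S`, is at most `E + Wc + 1`. -/
theorem stmt11 {V : Type*} (G : SimpleGraph V) (r : ℕ) (hr : 2 ≤ r)
    (hG : ¬ MinorOf (⊤ : SimpleGraph (Fin r)) G)
    (S : Finset V) (E Wc : ℕ)
    (hE : ∀ G' : SimpleGraph (Fin S.card), ¬ MinorOf (⊤ : SimpleGraph (Fin r)) G' →
      G'.edgeSet.ncard ≤ E)
    (hW : ∀ G' : SimpleGraph (Fin S.card), ¬ MinorOf (⊤ : SimpleGraph (Fin r)) G' →
      {t : Finset (Fin S.card) | t.Nonempty ∧ G'.IsClique (t : Set (Fin S.card))}.ncard ≤ Wc) :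
    {A : Set V | ∃ D : Set V, IsCompOf G (S : Set V) D ∧
      A = (S : Set V) ∩ {x | ∃ d ∈ D, G.Adj d x}}.ncard ≤ E + Wc + 1 :=
  stmt11_general G r hG S E Wc hE hW
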